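/- Let (a_n)_{n≥1} be complex numbers with a_1 ≠ 0 and a_n = O(n^α) for some α > 0. Then for every T > 2/log 2 and every s ∈ ℂ with Re s > α + 1, the integral ∫_{−∞}^{∞} (Σ_{n≥1} a_n n^{−s−it}) u_T(t) dt converges absolutely and equals 2π a₁ T. -/

import Mathlib

/-!
Substituting `x = e^v` turns `λ_T` into `v ↦ T e^{-2iT^{3/2}v} (φ₀ ⋆ φ₀)(Tv)`, a smooth function
supported in `|v| ≤ 2/T`, and `u_T(t)` is the Mellin transform of `λ_T` at `it`. So `u_T` is a
rescaled Fourier transform of a Schwartz function, hence integrable, and Mellin inversion on the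
line `Re s = 0` gives `∫ x^{z-it} u_T(t) dt = 2π x^z λ_T(x)` for `x > 0`. The Dirichlet series
converges absolutely, uniformly in `t`, so it may be integrated against `u_T` termwise: the `n`-th
term gives `2π a_n n^{-s} λ_T(n)`, which is `2π a_1 T` for `n = 1` and vanishes for `n ≥ 2`,
since `T log n ≥ T log 2 > 2` lies outside the support `[-2, 2]` of `φ₀ ⋆ φ₀`.
-/

open MeasureTheory Set

noncomputable section

/-- `e2 z = e^{2πiz}`. -/
def e2 (z : ℂ) : ℂ := Complex.exp (2 * Real.pi * Complex.I * z)

/-- `φ₀` is a smooth even bump function supported in `[-1,1]` with `0 ≤ φ₀ ≤ 1`,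
`φ₀(0) = 1` and `∫ φ₀² = 1`. -/
def IsBumpBase (φ₀ : ℝ → ℝ) : Prop :=
  ContDiff ℝ (⊤ : ℕ∞) φ₀ ∧ (∀ x, φ₀ (-x) = φ₀ x) ∧ tsupport φ₀ ⊆ Set.Icc (-1) 1 ∧
  (∀ x, 0 ≤ φ₀ x ∧ φ₀ x ≤ 1) ∧ φ₀ 0 = 1 ∧ (∫ u : ℝ, (φ₀ u) ^ 2) = 1

/-- `ψ(x) = φ₀(log x)`. -/
def psiF (φ₀ : ℝ → ℝ) (x : ℝ) : ℝ := φ₀ (Real.log x)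

/-- `λ(x) = ∫₀^∞ ψ(y)ψ(x/y) dy/y`. -/
def lamF (φ₀ : ℝ → ℝ) (x : ℝ) : ℝ :=
  ∫ y in Set.Ioi (0 : ℝ), psiF φ₀ y * psiF φ₀ (x / y) / y

/-- `λ_T(x) = T x^{-2iT^{3/2}} λ(x^T)`. -/
def lamT (φ₀ : ℝ → ℝ) (T x : ℝ) : ℂ :=
  (T : ℂ) * (x : ℂ) ^ (-(2 * Complex.I * ((T ^ ((3 : ℝ) / 2) : ℝ) : ℂ))) * (lamF φ₀ (x ^ T) : ℂ)

/-- `u_T(t) = ∫₀^∞ λ_T(x) x^{it-1} dx`. -/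
def uT (φ₀ : ℝ → ℝ) (T t : ℝ) : ℂ :=
  ∫ x in Set.Ioi (0 : ℝ), lamT φ₀ T x * (x : ℂ) ^ (Complex.I * (t : ℂ) - 1)


open Real Complex
open scoped FourierTransform ContDiff

section MellinOfCompExp

variable {E : Type*} [NormedAddCommGroup E] [NormedSpace ℂ E] {f : ℝ → E}

theorem mellinConvergent_of_comp_exp (hf : Continuous (f ∘ rexp))
    (hfc : HasCompactSupport (f ∘ rexp)) (σ : ℝ) : MellinConvergent f σ := by
  have hexp := integrableOn_image_iff_integrableOn_abs_deriv_smul MeasurableSet.univ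
    (fun v _ ↦ (Real.hasDerivAt_exp v).hasDerivWithinAt) Real.exp_injective.injOn
    (fun x : ℝ ↦ (x : ℂ) ^ ((σ : ℂ) - 1) • f x)
  rw [image_univ, Real.range_exp, integrableOn_univ] at hexp
  rw [MellinConvergent, hexp]
  refine Continuous.integrable_of_hasCompactSupport ?_ (hfc.smul_left.smul_left)
  refine (continuous_abs.comp Real.continuous_exp).smul (Continuous.smul ?_ hf)
  exact (Complex.continuous_ofReal.comp Real.continuous_exp).cpow continuous_const
    fun v ↦ ofReal_mem_slitPlane.2 (Real.exp_pos v)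

theorem verticalIntegrable_mellin_of_comp_exp [CompleteSpace E] (hf : ContDiff ℝ ∞ (f ∘ rexp))
    (hfc : HasCompactSupport (f ∘ rexp)) (σ : ℝ) : VerticalIntegrable (mellin f) σ := by
  set g : ℝ → E := fun u ↦ rexp (-σ * u) • f (rexp (-u))
  have hg : ContDiff ℝ ∞ g :=
    (Real.contDiff_exp.comp (contDiff_const.mul contDiff_id)).smul (hf.comp contDiff_neg)
  have hgc : HasCompactSupport g := (hfc.comp_homeomorph (Homeomorph.neg ℝ)).smul_left
  have hFg : Integrable (𝓕 g) := (𝓕 (hgc.toSchwartzMap hg)).integrable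
  refine (hFg.comp_mul_right' (inv_ne_zero two_pi_pos.ne')).congr
    (Filter.Eventually.of_forall fun y ↦ ?_)
  simp [g, mellin_eq_fourier, div_eq_mul_inv]

theorem mellinInv_mellin_eq_of_comp_exp [CompleteSpace E] (hf : ContDiff ℝ ∞ (f ∘ rexp))
    (hfc : HasCompactSupport (f ∘ rexp)) (σ : ℝ) {x : ℝ} (hx : 0 < x) :
    mellinInv σ (mellin f) x = f x := by
  have hfx : ContinuousAt f x := by
    refine ((hf.continuous.continuousAt).comp (Real.continuousAt_log hx.ne')).congr ?_
    filter_upwards [Ioi_mem_nhds hx] with y hy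
    simp [Real.exp_log hy]
  exact mellinInv_mellin_eq σ f hx (mellinConvergent_of_comp_exp hf.continuous hfc σ)
    (verticalIntegrable_mellin_of_comp_exp hf hfc σ) hfx

end MellinOfCompExp

theorem integral_Ioi_zero_eq_integral_exp_smul {E : Type*} [NormedAddCommGroup E]
    [NormedSpace ℝ E] (g : ℝ → E) : ∫ x in Ioi 0, g x = ∫ v, rexp v • g (rexp v) := by
  rw [← Real.range_exp, ← image_univ, integral_image_eq_integral_abs_deriv_smul
    MeasurableSet.univ (fun v _ ↦ (Real.hasDerivAt_exp v).hasDerivWithinAt)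
    Real.exp_injective.injOn g, setIntegral_univ]
  simp_rw [abs_of_pos (Real.exp_pos _)]

section Lambda

open scoped Convolution

variable {φ₀ : ℝ → ℝ}

variable (φ₀) in
theorem lamF_exp (u : ℝ) :
    lamF φ₀ (rexp u) = (φ₀ ⋆[ContinuousLinearMap.mul ℝ ℝ] φ₀) u := by
  rw [lamF, integral_Ioi_zero_eq_integral_exp_smul, convolution_def]
  congr 1 with w
  simp only [psiF, ← Real.exp_sub, Real.log_exp, smul_eq_mul, ContinuousLinearMap.mul_apply']
  field_simp

theorem lamF_one (heven : ∀ x, φ₀ (-x) = φ₀ x) (hnorm : ∫ u, φ₀ u ^ 2 = 1) :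
    lamF φ₀ 1 = 1 := by
  simpa [convolution_def, heven, ← sq, hnorm] using lamF_exp φ₀ 0

theorem lamF_exp_eq_zero_of_two_lt (hsupp : tsupport φ₀ ⊆ Icc (-1) 1) {u : ℝ} (hu : 2 < u) :
    lamF φ₀ (rexp u) = 0 := by
  rw [lamF_exp]
  by_contra h
  have hsub := (support_convolution_subset (ContinuousLinearMap.mul ℝ ℝ) (μ := volume)).trans
    ((add_subset_add (subset_tsupport φ₀) (subset_tsupport φ₀)).trans
      ((add_subset_add hsupp hsupp).trans (Icc_add_Icc_subset _ _ _ _))) h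
  norm_num at hsub
  linarith [hsub.2]

variable (φ₀) in
theorem lamT_comp_exp (T : ℝ) :
    lamT φ₀ T ∘ rexp = fun v : ℝ ↦ T * cexp (-(2 * I * ((T ^ ((3 : ℝ) / 2) : ℝ) : ℂ)) * v) *
      ((φ₀ ⋆[ContinuousLinearMap.mul ℝ ℝ] φ₀) (T * v) : ℂ) := by
  ext v
  rw [Function.comp_apply, lamT, ← Real.exp_mul, mul_comm v, lamF_exp, ofReal_exp,
    cpow_def_of_ne_zero (exp_ne_zero _), Complex.log_exp (by simp [pi_pos]) (by simp [pi_pos.le]),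
    mul_comm (v : ℂ)]

theorem contDiff_lamT_comp_exp (hsmooth : ContDiff ℝ ∞ φ₀) (hcs : HasCompactSupport φ₀) (T : ℝ) :
    ContDiff ℝ ∞ (lamT φ₀ T ∘ rexp) := by
  have hconv : ContDiff ℝ ∞ (φ₀ ⋆[ContinuousLinearMap.mul ℝ ℝ] φ₀) :=
    hcs.contDiff_convolution_right _ hsmooth.continuous.locallyIntegrable hsmooth
  rw [lamT_comp_exp]
  exact (contDiff_const.mul (contDiff_const.mul ofRealCLM.contDiff).cexp).mul
    (ofRealCLM.contDiff.comp (hconv.comp (contDiff_const.mul contDiff_id)))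

theorem hasCompactSupport_lamT_comp_exp (hcs : HasCompactSupport φ₀) {T : ℝ} (hT : T ≠ 0) :
    HasCompactSupport (lamT φ₀ T ∘ rexp) := by
  have hconv : HasCompactSupport (φ₀ ⋆[ContinuousLinearMap.mul ℝ ℝ] φ₀) := hcs.convolution _ hcs
  rw [lamT_comp_exp]
  exact ((hconv.comp_smul hT).comp_left ofReal_zero).mul_left

theorem lamT_one (heven : ∀ x, φ₀ (-x) = φ₀ x) (hnorm : ∫ u, φ₀ u ^ 2 = 1) (T : ℝ) :
    lamT φ₀ T 1 = T := by
  simp [lamT, lamF_one heven hnorm]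

theorem lamT_eq_zero_of_two_lt_mul_log (hsupp : tsupport φ₀ ⊆ Icc (-1) 1) {T x : ℝ} (hx : 0 < x)
    (h : 2 < T * Real.log x) : lamT φ₀ T x = 0 := by
  rw [lamT, Real.rpow_def_of_pos hx, mul_comm (Real.log x), lamF_exp_eq_zero_of_two_lt hsupp h,
    ofReal_zero, mul_zero]

end Lambda

section UT

variable {φ₀ : ℝ → ℝ} {T : ℝ}

variable (φ₀ T) in
theorem uT_eq_mellin (t : ℝ) : uT φ₀ T t = mellin (lamT φ₀ T) (t * I) := by
  simp only [uT, mellin, smul_eq_mul, mul_comm (I : ℂ), mul_comm (lamT φ₀ T _)]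

variable (hsmooth : ContDiff ℝ ∞ φ₀) (hcs : HasCompactSupport φ₀) (hT : T ≠ 0)
include hsmooth hcs hT

theorem integrable_uT : Integrable (uT φ₀ T) := by
  simpa [VerticalIntegrable, ← uT_eq_mellin] using verticalIntegrable_mellin_of_comp_exp
    (contDiff_lamT_comp_exp hsmooth hcs T) (hasCompactSupport_lamT_comp_exp hcs hT) 0

theorem integral_cpow_sub_mul_uT {x : ℝ} (hx : 0 < x) (z : ℂ) :
    ∫ t : ℝ, (x : ℂ) ^ (z - I * t) * uT φ₀ T t = 2 * π * x ^ z * lamT φ₀ T x := by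
  have hinv := mellinInv_mellin_eq_of_comp_exp (contDiff_lamT_comp_exp hsmooth hcs T)
    (hasCompactSupport_lamT_comp_exp hcs hT) 0 hx
  simp only [mellinInv, ofReal_zero, zero_add, smul_eq_mul, ← uT_eq_mellin] at hinv
  have hx0 : (x : ℂ) ≠ 0 := ofReal_ne_zero.2 hx.ne'
  have hsplit (t : ℝ) :
      (x : ℂ) ^ (z - I * t) * uT φ₀ T t = x ^ z * ((x : ℂ) ^ (-(t * I)) * uT φ₀ T t) := by
    rw [sub_eq_add_neg, cpow_add _ _ hx0, mul_comm I, mul_assoc]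
  have hJ : ∫ t : ℝ, (x : ℂ) ^ (-(t * I)) * uT φ₀ T t = 2 * π * lamT φ₀ T x := by
    rw [← hinv, real_smul, ← mul_assoc]
    push_cast
    rw [mul_one_div_cancel (by simp [pi_ne_zero]), one_mul]
  simp_rw [hsplit, integral_const_mul, hJ]
  ring

end UT

section TsumMul

variable {X : Type*} [TopologicalSpace X] [MeasurableSpace X] [OpensMeasurableSpace X]
  {μ : Measure X} {F : ℕ → X → ℂ} {S : ℕ → ℝ} {u : X → ℂ}

theorem integrable_tsum_mul (hF : ∀ n, Continuous (F n)) (hFS : ∀ n x, ‖F n x‖ ≤ S n)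
    (hS : Summable S) (hu : Integrable u μ) :
    Integrable (fun x ↦ (∑' n, F n x) * u x) μ :=
  hu.bdd_mul (continuous_tsum hF hS hFS).aestronglyMeasurable
    (Filter.Eventually.of_forall fun x ↦ tsum_of_norm_bounded hS.hasSum (hFS · x))

theorem integral_tsum_mul (hF : ∀ n, Continuous (F n)) (hFS : ∀ n x, ‖F n x‖ ≤ S n)
    (hS : Summable S) (hu : Integrable u μ) :
    ∫ x, (∑' n, F n x) * u x ∂μ = ∑' n, ∫ x, F n x * u x ∂μ := by
  have hFu (n : ℕ) : Integrable (fun x ↦ F n x * u x) μ :=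
    hu.bdd_mul (hF n).aestronglyMeasurable (Filter.Eventually.of_forall (hFS n))
  have hnorm (n : ℕ) : ∫ x, ‖F n x * u x‖ ∂μ ≤ S n * ∫ x, ‖u x‖ ∂μ := by
    rw [← integral_const_mul]
    refine integral_mono (hFu n).norm (hu.norm.const_mul _) fun x ↦ ?_
    rw [norm_mul]
    exact mul_le_mul_of_nonneg_right (hFS n x) (norm_nonneg _)
  simp_rw [← tsum_mul_right]
  exact (integral_tsum_of_summable_integral_norm hFu ((hS.mul_right _).of_nonneg_of_le
    (fun n ↦ integral_nonneg fun _ ↦ norm_nonneg _) hnorm)).symm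

end TsumMul

section DirichletSeries

variable {a : ℕ → ℂ} {C α : ℝ} {s : ℂ} {u : ℝ → ℂ}

theorem summable_norm_mul_rpow_neg {σ : ℝ} (hbd : ∀ n : ℕ, ‖a (n + 1)‖ ≤ C * ((n : ℝ) + 1) ^ α)
    (hσ : α + 1 < σ) : Summable fun n : ℕ ↦ ‖a (n + 1)‖ * ((n : ℝ) + 1) ^ (-σ) := by
  have hp : Summable fun n : ℕ ↦ ((n : ℝ) + 1) ^ (α - σ) := by
    simpa using (summable_nat_add_iff 1).2 (Real.summable_nat_rpow.2 (by linarith : α - σ < -1))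
  refine (hp.mul_left C).of_nonneg_of_le (fun n ↦ by positivity) fun n ↦ ?_
  calc ‖a (n + 1)‖ * ((n : ℝ) + 1) ^ (-σ) ≤ C * ((n : ℝ) + 1) ^ α * ((n : ℝ) + 1) ^ (-σ) := by
        gcongr; exact hbd n
    _ = C * ((n : ℝ) + 1) ^ (α - σ) := by
        rw [mul_assoc, ← Real.rpow_add (by positivity), sub_eq_add_neg]

theorem norm_natCast_add_one_cpow (n : ℕ) (z : ℂ) :
    ‖((n : ℂ) + 1) ^ z‖ = ((n : ℝ) + 1) ^ z.re := by
  exact_mod_cast norm_natCast_cpow_of_pos n.succ_pos z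

theorem continuous_dirichletTerm (a : ℂ) (n : ℕ) (s : ℂ) :
    Continuous fun t : ℝ ↦ a * ((n : ℂ) + 1) ^ (-s - I * t) :=
  continuous_const.mul ((continuous_const.sub (continuous_const.mul continuous_ofReal)).const_cpow
    (Or.inl (by exact_mod_cast n.succ_ne_zero)))

theorem norm_dirichletTerm (a : ℂ) (n : ℕ) (s : ℂ) (t : ℝ) :
    ‖a * ((n : ℂ) + 1) ^ (-s - I * t)‖ = ‖a‖ * ((n : ℝ) + 1) ^ (-s.re) := by
  simp [norm_natCast_add_one_cpow]

variable (hbd : ∀ n : ℕ, ‖a (n + 1)‖ ≤ C * ((n : ℝ) + 1) ^ α) (hs : α + 1 < s.re)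
  (hu : Integrable u)
include hbd hs hu

theorem integrable_dirichletSeries_mul :
    Integrable fun t : ℝ ↦ (∑' n : ℕ, a (n + 1) * ((n : ℂ) + 1) ^ (-s - I * t)) * u t :=
  integrable_tsum_mul (fun n ↦ continuous_dirichletTerm _ n s)
    (fun n t ↦ (norm_dirichletTerm _ n s t).le) (summable_norm_mul_rpow_neg hbd hs) hu

theorem integral_dirichletSeries_mul :
    ∫ t : ℝ, (∑' n : ℕ, a (n + 1) * ((n : ℂ) + 1) ^ (-s - I * t)) * u t =
      ∑' n : ℕ, ∫ t : ℝ, a (n + 1) * ((n : ℂ) + 1) ^ (-s - I * t) * u t :=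
  integral_tsum_mul (fun n ↦ continuous_dirichletTerm _ n s)
    (fun n t ↦ (norm_dirichletTerm _ n s t).le) (summable_norm_mul_rpow_neg hbd hs) hu

end DirichletSeries

theorem dirichlet_series_against_uT_general
    (φ₀ : ℝ → ℝ) (hφ₀ : IsBumpBase φ₀)
    (a : ℕ → ℂ) (α : ℝ)
    (hbd : ∃ C : ℝ, ∀ n : ℕ, ‖a (n + 1)‖ ≤ C * ((n : ℝ) + 1) ^ α) :
    ∀ T : ℝ, 2 / Real.log 2 < T → ∀ s : ℂ, α + 1 < s.re →
      Integrable (fun t : ℝ =>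
        (∑' n : ℕ, a (n + 1) * ((n : ℂ) + 1) ^ (-s - Complex.I * (t : ℂ))) * uT φ₀ T t) ∧
      (∫ t : ℝ,
        (∑' n : ℕ, a (n + 1) * ((n : ℂ) + 1) ^ (-s - Complex.I * (t : ℂ))) * uT φ₀ T t) =
        2 * (Real.pi : ℂ) * a 1 * (T : ℂ) := by
  obtain ⟨hsmooth, heven, hsupp, -, -, hnorm⟩ := hφ₀
  have hcs : HasCompactSupport φ₀ := isCompact_Icc.of_isClosed_subset (isClosed_tsupport φ₀) hsupp
  obtain ⟨C, hC⟩ := hbd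
  intro T hT s hs
  have hlog2 : 2 < T * Real.log 2 := by rwa [div_lt_iff₀ (Real.log_pos one_lt_two)] at hT
  have hTpos : 0 < T := lt_trans (by positivity) hT
  have hu := integrable_uT hsmooth hcs hTpos.ne'
  refine ⟨integrable_dirichletSeries_mul hC hs hu, ?_⟩
  have hterm (n : ℕ) : ∫ t : ℝ, a (n + 1) * ((n : ℂ) + 1) ^ (-s - I * t) * uT φ₀ T t =
      2 * π * a (n + 1) * ((n : ℂ) + 1) ^ (-s) * lamT φ₀ T ((n : ℝ) + 1) := by
    have h := integral_cpow_sub_mul_uT hsmooth hcs hTpos.ne' n.cast_add_one_pos (-s)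
    push_cast at h
    simp_rw [mul_assoc, integral_const_mul, h]
    ring
  rw [integral_dirichletSeries_mul hC hs hu, tsum_eq_single 0 fun n hn ↦ ?_, hterm]
  · simp [lamT_one heven hnorm]
  · have hlog : Real.log 2 ≤ Real.log ((n : ℝ) + 1) :=
      Real.log_le_log two_pos (by norm_cast; omega)
    rw [hterm, lamT_eq_zero_of_two_lt_mul_log hsupp (by positivity)
      (by nlinarith [mul_le_mul_of_nonneg_left hlog hTpos.le]), mul_zero]

/-- For `T > 2/log 2` and `Re s > α + 1`,
`∫ (Σ_{n≥1} a_n n^{-s-it}) u_T(t) dt = 2π a₁ T`, with absolute convergence. -/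
theorem dirichlet_series_against_uT
    (φ₀ : ℝ → ℝ) (hφ₀ : IsBumpBase φ₀)
    (a : ℕ → ℂ) (ha1 : a 1 ≠ 0) (α : ℝ) (hα : 0 < α)
    (hbd : ∃ C : ℝ, ∀ n : ℕ, ‖a (n + 1)‖ ≤ C * ((n : ℝ) + 1) ^ α) :
    ∀ T : ℝ, 2 / Real.log 2 < T → ∀ s : ℂ, α + 1 < s.re →
      Integrable (fun t : ℝ =>
        (∑' n : ℕ, a (n + 1) * ((n : ℂ) + 1) ^ (-s - Complex.I * (t : ℂ))) * uT φ₀ T t) ∧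
      (∫ t : ℝ,
        (∑' n : ℕ, a (n + 1) * ((n : ℂ) + 1) ^ (-s - Complex.I * (t : ℂ))) * uT φ₀ T t) =
        2 * (Real.pi : ℂ) * a 1 * (T : ℂ) :=
  dirichlet_series_against_uT_general φ₀ hφ₀ a α hbd
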